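/- arXiv:2211.01862 — 4 statements merged into one kernel-verified Lean document; each statement's English description precedes it below -/
import Mathlib

section
/- Let α ∈ (0,1) and let a, k, b be positive integers with a ≥ k/α. Let G be a bipartite graph with parts A and B, where |A| = a and |B| = b, and suppose the number of edges satisfies e(A,B) ≥ α·a·b. Then there exists a subset S ⊆ A of size k such that the vertices of S have at least (α/e)^k · b common neighbours in B. -/
open Finset

/-- Product of shifted linear factors is convex, monotone and nonneg on `[t, ∞)`
provided all roots are `≤ t`. -/
lemma prodlin_props (t : ℝ) (c : ℕ → ℝ) :
    ∀ k : ℕ, (∀ i, i < k → c i ≤ t) →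
      ConvexOn ℝ (Set.Ici t) (fun x => ∏ i ∈ Finset.range k, (x - c i)) ∧
      MonotoneOn (fun x => ∏ i ∈ Finset.range k, (x - c i)) (Set.Ici t) ∧
      ∀ x ∈ Set.Ici t, 0 ≤ ∏ i ∈ Finset.range k, (x - c i) := by
  intro k
  induction k with
  | zero =>
      intro _
      simp only [Finset.range_zero, Finset.prod_empty]
      exact ⟨convexOn_const 1 (convex_Ici t), monotoneOn_const, fun _ _ => zero_le_one⟩
  | succ k ih =>
      intro h
      obtain ⟨hcv, hmono, hpos⟩ := ih (fun i hi => h i (hi.trans (Nat.lt_succ_self k)))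
      have hgc : ConvexOn ℝ (Set.Ici t) (fun x : ℝ => x - c k) :=
        (convexOn_id (convex_Ici t)).sub (concaveOn_const _ (convex_Ici t))
      have hgm : MonotoneOn (fun x : ℝ => x - c k) (Set.Ici t) :=
        fun x _ y _ hxy => sub_le_sub_right hxy _
      have hgp : ∀ x ∈ Set.Ici t, (0 : ℝ) ≤ x - c k := fun x hx =>
        sub_nonneg.2 ((h k (Nat.lt_succ_self k)).trans hx)
      have hmv : MonovaryOn (fun x => ∏ i ∈ Finset.range k, (x - c i))
          (fun x : ℝ => x - c k) (Set.Ici t) := hmono.monovaryOn hgm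
      have hmul := hcv.mul hgc hpos hgp hmv
      refine ⟨?_, ?_, ?_⟩
      · simp only [Finset.prod_range_succ]; exact hmul
      · intro x hx y hy hxy
        simp only [Finset.prod_range_succ]
        exact mul_le_mul (hmono hx hy hxy) (sub_le_sub_right hxy _) (hgp x hx)
          ((hpos y hy))
      · intro x hx
        simp only [Finset.prod_range_succ]
        exact mul_nonneg (hpos x hx) (hgp x hx)

/-- `k^k ≤ k! * e^k`. -/
lemma pow_le_factorial_mul_exp (k : ℕ) :
    (k : ℝ) ^ k ≤ (Nat.factorial k : ℝ) * Real.exp 1 ^ k := by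
  have h1 : (k : ℝ) ^ k / (Nat.factorial k : ℝ) ≤ Real.exp (k : ℝ) := by
    refine le_trans ?_ (Real.sum_le_exp_of_nonneg (by positivity) (k + 1))
    have hk : k ∈ Finset.range (k + 1) := Finset.self_mem_range_succ k
    refine Finset.single_le_sum (f := fun i => (k : ℝ) ^ i / (Nat.factorial i : ℝ))
      (fun i _ => by positivity) hk
  have h2 : Real.exp (k : ℝ) = Real.exp 1 ^ k := by
    rw [← Real.exp_nat_mul, mul_one]
  have hf : (0 : ℝ) < (Nat.factorial k : ℝ) := by
    exact_mod_cast Nat.factorial_pos k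
  calc (k : ℝ) ^ k = (k : ℝ) ^ k / (Nat.factorial k : ℝ) * (Nat.factorial k : ℝ) := by
        field_simp
    _ ≤ Real.exp (k : ℝ) * (Nat.factorial k : ℝ) := by
        exact mul_le_mul_of_nonneg_right h1 hf.le
    _ = (Nat.factorial k : ℝ) * Real.exp 1 ^ k := by rw [h2]; ring

/-- `∏_{i<k} ((k:ℝ) - i) = k!`. -/
lemma prod_sub_eq_factorial (k : ℕ) :
    (∏ i ∈ Finset.range k, ((k : ℝ) - (i : ℕ))) = (Nat.factorial k : ℝ) := by
  have hnat : (∏ i ∈ Finset.range k, (k - i)) = Nat.factorial k := by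
    have := Finset.prod_range_reflect (fun j => j + 1) k
    rw [Finset.prod_range_add_one_eq_factorial] at this
    rw [← this]
    refine Finset.prod_congr rfl fun j hj => ?_
    have hj' : j < k := Finset.mem_range.mp hj
    omega
  calc (∏ i ∈ Finset.range k, ((k : ℝ) - (i : ℕ)))
      = ((∏ i ∈ Finset.range k, (k - i) : ℕ) : ℝ) := by
        rw [Nat.cast_prod]
        refine Finset.prod_congr rfl fun i hi => ?_
        have : i ≤ k := (Finset.mem_range.mp hi).le
        rw [Nat.cast_sub this]
    _ = (Nat.factorial k : ℝ) := by rw [hnat]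

set_option maxHeartbeats 1000000 in
/-- Let `α ∈ (0,1)` and `a, k, b` be positive integers with `a ≥ k/α`. If a bipartite graph
with parts `A` of size `a` and `B` of size `b` has at least `α·a·b` edges, then some `k`-set
`S ⊆ A` has at least `(α/e)^k · b` common neighbours in `B`. -/
theorem stmt_2 (α : ℝ) (hα0 : 0 < α) (hα1 : α < 1) (a k b : ℕ)
    (ha : 0 < a) (hk : 0 < k) (hb : 0 < b) (hak : (a : ℝ) ≥ k / α)
    (E : Fin a → Fin b → Bool)
    (hE : (((univ : Finset (Fin a × Fin b)).filter fun p => E p.1 p.2).card : ℝ) ≥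
      α * a * b) :
    ∃ S : Finset (Fin a), S.card = k ∧
      (((univ : Finset (Fin b)).filter fun w => ∀ v ∈ S, E v w).card : ℝ) ≥
        (α / Real.exp 1) ^ k * b := by
  classical
  set N : Fin b → Finset (Fin a) := fun w => univ.filter fun v => E v w with hN
  set d : Fin b → ℕ := fun w => (N w).card with hd
  set m : ℝ := α * a with hm
  have hkm : (k : ℝ) ≤ m := by
    rw [hm]
    have := (div_le_iff₀ hα0).mp hak
    linarith [this]
  have hk1m : (k : ℝ) - 1 ≤ m := by linarith
  -- edge count = sum of degrees
  have hEsum : ((univ : Finset (Fin a × Fin b)).filter fun p => E p.1 p.2).card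
      = ∑ w : Fin b, d w := by
    rw [Finset.card_filter, Fintype.sum_prod_type_right]
    refine Finset.sum_congr rfl fun w _ => ?_
    simp only [hd, hN, Finset.card_filter]
  -- real degree sum bound
  have hdsum : α * a * b ≤ ∑ w : Fin b, (d w : ℝ) := by
    calc α * a * b ≤ ((univ.filter fun p : Fin a × Fin b => E p.1 p.2).card : ℝ) := hE
      _ = ∑ w : Fin b, (d w : ℝ) := by rw [hEsum]; push_cast; ring_nf
  -- convex minorant data
  set P : ℝ → ℝ := fun x => ∏ i ∈ Finset.range k, (x - (i : ℕ)) with hP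
  obtain ⟨hPcv, hPmono, hPpos⟩ := prodlin_props ((k : ℝ) - 1) (fun i => (i : ℕ)) k
    (fun i hi => by
      have : (i : ℝ) + 1 ≤ (k : ℝ) := by exact_mod_cast hi
      linarith)
  set D : Fin b → ℝ := fun w => max (d w) ((k : ℝ) - 1) with hD
  have hDmem : ∀ w : Fin b, D w ∈ Set.Ici ((k : ℝ) - 1) := fun w => Set.mem_Ici.mpr (le_max_right _ _)
  -- P (D w) = k! * choose (d w) k
  have hPD : ∀ w : Fin b, P (D w) = ((Nat.factorial k * (d w).choose k : ℕ) : ℝ) := by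
    intro w
    rw [← Nat.descFactorial_eq_factorial_mul_choose]
    rcases le_or_gt k (d w) with hkd | hkd
    · have hDw : D w = (d w : ℝ) := by
        rw [hD]
        refine max_eq_left ?_
        have : (k : ℝ) ≤ (d w : ℝ) := by exact_mod_cast hkd
        linarith
      rw [hDw, hP]
      rw [Nat.descFactorial_eq_prod_range, Nat.cast_prod]
      refine Finset.prod_congr rfl fun i hi => ?_
      have hik : i < k := Finset.mem_range.mp hi
      rw [Nat.cast_sub (le_trans hik.le hkd)]
    · have hdf : (d w).descFactorial k = 0 := Nat.descFactorial_eq_zero_iff_lt.mpr hkd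
      rw [hdf]
      have hDw : D w = (k : ℝ) - 1 := by
        rw [hD]
        refine max_eq_right ?_
        have : (d w : ℝ) + 1 ≤ (k : ℝ) := by exact_mod_cast hkd
        linarith
      rw [hDw, hP]
      have hkm1 : k - 1 ∈ Finset.range k := by
        rw [Finset.mem_range]; omega
      rw [Nat.cast_zero]
      refine Finset.prod_eq_zero hkm1 ?_
      have : ((k - 1 : ℕ) : ℝ) = (k : ℝ) - 1 := by
        rw [Nat.cast_sub hk]; norm_num
      rw [this]; ring
  -- Jensen
  have hbR : (0 : ℝ) < b := by exact_mod_cast hb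
  have hwsum : ∑ _w : Fin b, ((b : ℝ))⁻¹ = 1 := by
    simp [Finset.card_univ]
    field_simp
  have hJ := hPcv.map_sum_le (t := (univ : Finset (Fin b))) (w := fun _ => ((b : ℝ))⁻¹)
    (p := D) (fun _ _ => by positivity) hwsum (fun w _ => hDmem w)
  -- the average is ≥ m
  have havg : m ≤ ∑ w : Fin b, ((b : ℝ))⁻¹ • D w := by
    have h1 : ∑ w : Fin b, ((b : ℝ))⁻¹ • D w = (b : ℝ)⁻¹ * ∑ w : Fin b, D w := by
      rw [Finset.mul_sum]
      rfl
    have h2 : ∑ w : Fin b, (d w : ℝ) ≤ ∑ w : Fin b, D w :=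
      Finset.sum_le_sum fun w _ => le_max_left _ _
    rw [h1]
    rw [ge_iff_le, le_inv_mul_iff₀ hbR] at *
    · nlinarith [hdsum, h2]
  have havgmem : (∑ w : Fin b, ((b : ℝ))⁻¹ • D w) ∈ Set.Ici ((k : ℝ) - 1) :=
    le_trans hk1m havg
  have hPm_avg : P m ≤ P (∑ w : Fin b, ((b : ℝ))⁻¹ • D w) :=
    hPmono (Set.mem_Ici.mpr hk1m) havgmem havg
  have hJensen : (b : ℝ) * P m ≤ ∑ w : Fin b, P (D w) := by
    have h3 : P m ≤ ∑ w : Fin b, ((b : ℝ))⁻¹ • P (D w) := le_trans hPm_avg hJ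
    have h4 : ∑ w : Fin b, ((b : ℝ))⁻¹ • P (D w) = (b : ℝ)⁻¹ * ∑ w : Fin b, P (D w) := by
      rw [Finset.mul_sum]; rfl
    rw [h4] at h3
    calc (b : ℝ) * P m ≤ (b : ℝ) * ((b : ℝ)⁻¹ * ∑ w : Fin b, P (D w)) :=
          mul_le_mul_of_nonneg_left h3 hbR.le
      _ = ∑ w : Fin b, P (D w) := by field_simp
  -- double counting
  set PP : Finset (Finset (Fin a)) := Finset.powersetCard k (univ : Finset (Fin a)) with hPP
  set c : Finset (Fin a) → ℕ := fun S => (univ.filter fun w : Fin b => ∀ v ∈ S, E v w).card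
    with hc
  have hcount : ∑ S ∈ PP, c S = ∑ w : Fin b, (d w).choose k := by
    calc ∑ S ∈ PP, c S
        = ∑ S ∈ PP, ∑ w : Fin b, if ∀ v ∈ S, E v w then 1 else 0 := by
          refine Finset.sum_congr rfl fun S _ => ?_
          exact Finset.card_filter _ _
      _ = ∑ w : Fin b, ∑ S ∈ PP, if ∀ v ∈ S, E v w then 1 else 0 := Finset.sum_comm
      _ = ∑ w : Fin b, (d w).choose k := by
          refine Finset.sum_congr rfl fun w _ => ?_
          rw [← Finset.card_filter]
          have hfilt : PP.filter (fun S => ∀ v ∈ S, E v w)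
              = Finset.powersetCard k (N w) := by
            ext S
            simp only [Finset.mem_filter, hPP, Finset.mem_powersetCard, hN,
              Finset.subset_iff, Finset.mem_filter, Finset.mem_univ, true_and,
              Finset.subset_univ]
            tauto
          rw [hfilt, Finset.card_powersetCard]
  -- choose the best S
  have hka : k ≤ a := by
    by_contra hcon
    push_neg at hcon
    have : (a : ℝ) < (k : ℝ) := by exact_mod_cast hcon
    have : (k : ℝ) ≤ m := hkm
    rw [hm] at this
    nlinarith
  have hPPne : PP.Nonempty := Finset.powersetCard_nonempty.mpr (by simpa using hka)
  obtain ⟨S0, hS0mem, hS0max⟩ := Finset.exists_max_image PP c hPPne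
  have hS0card : S0.card = k := (Finset.mem_powersetCard.mp hS0mem).2
  have hsum_le : ∑ S ∈ PP, c S ≤ a.choose k * c S0 := by
    calc ∑ S ∈ PP, c S ≤ PP.card • c S0 := Finset.sum_le_card_nsmul _ _ _ fun S hS => hS0max S hS
      _ = a.choose k * c S0 := by
          rw [hPP, Finset.card_powersetCard, Finset.card_univ, Fintype.card_fin, smul_eq_mul]
  -- combine everything
  have hkey : (b : ℝ) * P m ≤ (a : ℝ) ^ k * (c S0 : ℝ) := by
    have h5 : ∑ w : Fin b, P (D w)
        = (Nat.factorial k : ℝ) * ∑ w : Fin b, ((d w).choose k : ℝ) := by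
      rw [Finset.mul_sum]
      refine Finset.sum_congr rfl fun w _ => ?_
      rw [hPD w]; push_cast; ring
    have h6 : (Nat.factorial k : ℝ) * ∑ w : Fin b, ((d w).choose k : ℝ)
        ≤ (Nat.factorial k : ℝ) * (a.choose k * c S0 : ℕ) := by
      refine mul_le_mul_of_nonneg_left ?_ (by positivity)
      have : ((∑ w : Fin b, (d w).choose k : ℕ) : ℝ) ≤ ((a.choose k * c S0 : ℕ) : ℝ) := by
        exact_mod_cast (hcount ▸ hsum_le)
      push_cast at this ⊢
      convert this using 1
    have h7 : (Nat.factorial k : ℝ) * ((a.choose k : ℕ) : ℝ)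
        ≤ (a : ℝ) ^ k := by
      have : Nat.factorial k * a.choose k ≤ a ^ k := by
        rw [← Nat.descFactorial_eq_factorial_mul_choose]
        exact Nat.descFactorial_le_pow a k
      exact_mod_cast this
    calc (b : ℝ) * P m ≤ ∑ w : Fin b, P (D w) := hJensen
      _ = (Nat.factorial k : ℝ) * ∑ w : Fin b, ((d w).choose k : ℝ) := h5
      _ ≤ (Nat.factorial k : ℝ) * (a.choose k * c S0 : ℕ) := h6
      _ = (Nat.factorial k : ℝ) * (a.choose k : ℕ) * (c S0 : ℝ) := by push_cast; ring
      _ ≤ (a : ℝ) ^ k * (c S0 : ℝ) := by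
          refine mul_le_mul_of_nonneg_right h7 (by positivity)
  -- lower bound P m ≥ (m/k)^k * k!
  have hkR : (0 : ℝ) < k := by exact_mod_cast hk
  have hPm_lb : (m / k) ^ k * (Nat.factorial k : ℝ) ≤ P m := by
    have hconst : (m / k) ^ k = ∏ _i ∈ Finset.range k, (m / k) := by
      rw [Finset.prod_const, Finset.card_range]
    rw [hP, ← prod_sub_eq_factorial k, hconst, ← Finset.prod_mul_distrib]
    · refine Finset.prod_le_prod ?_ ?_
      · intro i hi
        have hik : i < k := Finset.mem_range.mp hi
        have h1 : (i : ℝ) ≤ (k : ℝ) := by exact_mod_cast hik.le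
        have h2 : (0 : ℝ) ≤ m / k := by positivity
        exact mul_nonneg h2 (by linarith)
      · intro i hi
        have hik : i < k := Finset.mem_range.mp hi
        have h1 : (i : ℝ) + 1 ≤ (k : ℝ) := by exact_mod_cast hik
        have h2 : (1 : ℝ) ≤ m / k := by
          rw [le_div_iff₀ hkR]; linarith
        have h3 : m / k * ((k : ℝ) - i) = m - m / k * i := by
          rw [mul_sub, div_mul_cancel₀ m (ne_of_gt hkR)]
        rw [h3]
        have h4 : (i : ℝ) ≤ m / k * i :=
          le_mul_of_one_le_left (Nat.cast_nonneg i) h2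
        linarith
  -- final numeric chain
  refine ⟨S0, hS0card, ?_⟩
  have hgoal : (α / Real.exp 1) ^ k * (b : ℝ) ≤ (c S0 : ℝ) := by
    have he : (0 : ℝ) < Real.exp 1 := Real.exp_pos 1
    have hek : (0 : ℝ) < Real.exp 1 ^ k := by positivity
    have hfac : (k : ℝ) ^ k / Real.exp 1 ^ k ≤ (Nat.factorial k : ℝ) := by
      rw [div_le_iff₀ hek]
      exact pow_le_factorial_mul_exp k
    have hstep : (m / Real.exp 1) ^ k * (b : ℝ) ≤ (a : ℝ) ^ k * (c S0 : ℝ) := by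
      have h8 : (m / Real.exp 1) ^ k ≤ (m / k) ^ k * (Nat.factorial k : ℝ) := by
        have h9 : (m / Real.exp 1) ^ k = (m / k) ^ k * ((k : ℝ) ^ k / Real.exp 1 ^ k) := by
          rw [div_pow, div_pow]
          field_simp
        rw [h9]
        refine mul_le_mul_of_nonneg_left hfac (by positivity)
      calc (m / Real.exp 1) ^ k * (b : ℝ)
          ≤ (m / k) ^ k * (Nat.factorial k : ℝ) * (b : ℝ) :=
            mul_le_mul_of_nonneg_right h8 hbR.le
        _ ≤ P m * (b : ℝ) := mul_le_mul_of_nonneg_right hPm_lb hbR.le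
        _ = (b : ℝ) * P m := by ring
        _ ≤ (a : ℝ) ^ k * (c S0 : ℝ) := hkey
    have haR : (0 : ℝ) < a := by exact_mod_cast ha
    have hapow : (0 : ℝ) < (a : ℝ) ^ k := by positivity
    have hme : (m / Real.exp 1) ^ k = (α / Real.exp 1) ^ k * (a : ℝ) ^ k := by
      rw [hm, ← mul_pow]
      congr 1
      field_simp
    rw [hme] at hstep
    nlinarith [hstep, hapow]
  exact hgoal
end

section
/- Let k, a, b be positive integers with a ≥ 2k. Then every 2-colouring (with red and blue) of the edges of the complete bipartite graph K_{a,b} with parts A of size a and B of size b contains a monochromatic copy of K_{k, ⌈b/(2e)^k⌉} whose part of size k is contained in A; that is, there exist a set S ⊆ A of size k and a set T ⊆ B of size at least b/(2e)^k such that all edges between S and T have the same colour. -/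
open Finset

/-- `m^k * k! ≤ m.descFactorial k * k^k` when `k ≤ m`. -/
private lemma aux_pow_mul_factorial_le (m k : ℕ) (h : k ≤ m) :
    m ^ k * k.factorial ≤ m.descFactorial k * k ^ k := by
  have hfac : k.factorial = ∏ i ∈ Finset.range k, (k - i) := by
    rw [← Finset.prod_range_add_one_eq_factorial, ← Finset.prod_range_reflect (fun j => j + 1) k]
    exact Finset.prod_congr rfl fun i hi => by
      have := Finset.mem_range.mp hi; omega
  calc m ^ k * k.factorial = ∏ i ∈ Finset.range k, (m * (k - i)) := by
        rw [Finset.prod_mul_distrib, Finset.prod_const, Finset.card_range, ← hfac]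
    _ ≤ ∏ i ∈ Finset.range k, ((m - i) * k) := by
        apply Finset.prod_le_prod (fun _ _ => Nat.zero_le _)
        intro i hi
        have hik : i < k := Finset.mem_range.mp hi
        have h1 : i ≤ k := hik.le
        have h2 : i ≤ m := h1.trans h
        zify [h1, h2]
        nlinarith [mul_le_mul_of_nonneg_left (show (k : ℤ) ≤ m by exact_mod_cast h)
          (show (0 : ℤ) ≤ i by positivity)]
    _ = m.descFactorial k * k ^ k := by
        rw [Finset.prod_mul_distrib, Finset.prod_const, Finset.card_range,
          ← Nat.descFactorial_eq_prod_range]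

/-- `k^k ≤ e^(k-1) * k!` for `k ≥ 1`. -/
private lemma aux_pow_le_exp_mul_factorial :
    ∀ k : ℕ, 1 ≤ k → (k : ℝ) ^ k ≤ Real.exp ((k : ℝ) - 1) * k.factorial := by
  intro k hk1
  induction k, hk1 using Nat.le_induction with
  | base => simp
  | succ n hn ihn =>
    have hn0 : (0 : ℝ) < n := by exact_mod_cast hn
    have key : ((n : ℝ) + 1) ^ n ≤ Real.exp 1 * (n : ℝ) ^ n := by
      have h1 : (1 + 1 / (n : ℝ)) ≤ Real.exp (1 / n) := by
        have := Real.add_one_le_exp (1 / (n : ℝ)); linarith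
      have h2 : (1 + 1 / (n : ℝ)) ^ n ≤ Real.exp (1 / n) ^ n :=
        pow_le_pow_left₀ (by positivity) h1 n
      have h3 : Real.exp (1 / (n : ℝ)) ^ n = Real.exp 1 := by
        rw [← Real.exp_nat_mul]
        congr 1
        field_simp
      have h4 : ((n : ℝ) + 1) ^ n = (n : ℝ) ^ n * (1 + 1 / (n : ℝ)) ^ n := by
        rw [← mul_pow]
        congr 1
        field_simp
      rw [h4]
      calc (n : ℝ) ^ n * (1 + 1 / (n : ℝ)) ^ n ≤ (n : ℝ) ^ n * Real.exp 1 := by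
            apply mul_le_mul_of_nonneg_left _ (by positivity)
            rw [← h3]; exact h2
        _ = Real.exp 1 * (n : ℝ) ^ n := by ring
    have hexp : Real.exp ((n : ℝ) - 1) * Real.exp 1 = Real.exp ((n : ℝ) + 1 - 1) := by
      rw [← Real.exp_add]; ring_nf
    have hfact : ((n + 1).factorial : ℝ) = ((n : ℝ) + 1) * n.factorial := by
      rw [Nat.factorial_succ]; push_cast; ring
    push_cast
    calc ((n : ℝ) + 1) ^ (n + 1) = ((n : ℝ) + 1) * ((n : ℝ) + 1) ^ n := by ring
      _ ≤ ((n : ℝ) + 1) * (Real.exp 1 * (n : ℝ) ^ n) :=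
          mul_le_mul_of_nonneg_left key (by positivity)
      _ ≤ ((n : ℝ) + 1) * (Real.exp 1 * (Real.exp ((n : ℝ) - 1) * n.factorial)) := by
          apply mul_le_mul_of_nonneg_left _ (by positivity)
          exact mul_le_mul_of_nonneg_left ihn (Real.exp_pos 1).le
      _ = Real.exp ((n : ℝ) + 1 - 1) * (((n : ℝ) + 1) * n.factorial) := by
          rw [← hexp]; ring
      _ = Real.exp ((n : ℝ) + 1 - 1) * ((n + 1).factorial : ℝ) := by rw [hfact]

set_option maxHeartbeats 1000000 in
/-- Let `k, a, b` be positive integers with `a ≥ 2k`. Every 2-colouring (`true` = red,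
`false` = blue) of the complete bipartite graph `K_{a,b}` with parts `A` of size `a` and `B`
of size `b` contains a monochromatic copy of `K_{k, b/(2e)^k}` with the part of size `k`
contained in `A`: there are `S ⊆ A` of size `k` and `T ⊆ B` of size at least `b/(2e)^k`
such that all edges between `S` and `T` have the same colour. -/
theorem stmt_3 (k a b : ℕ) (hk : 0 < k) (ha : 0 < a) (hb : 0 < b) (hak : a ≥ 2 * k)
    (c : Fin a → Fin b → Bool) :
    ∃ (S : Finset (Fin a)) (T : Finset (Fin b)) (col : Bool),
      S.card = k ∧ (T.card : ℝ) ≥ (b : ℝ) / (2 * Real.exp 1) ^ k ∧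
      ∀ u ∈ S, ∀ v ∈ T, c u v = col := by
  classical
  set m : ℕ := a - a / 2 with hm
  have hka : k ≤ a := by omega
  have hkm : k ≤ m := by omega
  -- the set of candidate pairs
  set P : Finset (Finset (Fin a) × Bool) :=
    (Finset.powersetCard k (Finset.univ : Finset (Fin a))) ×ˢ (Finset.univ : Finset Bool)
    with hP
  set g : Finset (Fin a) × Bool → ℕ :=
    fun p => (Finset.univ.filter fun v => ∀ u ∈ p.1, c u v = p.2).card with hg
  -- each vertex v of B sees at least `m.choose k` pairs
  have key : ∀ v : Fin b,
      m.choose k ≤ (P.filter fun p => ∀ u ∈ p.1, c u v = p.2).card := by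
    intro v
    -- find majority colour
    obtain ⟨col, hcol⟩ : ∃ col : Bool,
        m ≤ (Finset.univ.filter fun u => c u v = col).card := by
      by_cases hcase : m ≤ (Finset.univ.filter fun u => c u v = true).card
      · exact ⟨true, hcase⟩
      · refine ⟨false, ?_⟩
        have hsplit : (Finset.univ.filter fun u => c u v = true).card
            + (Finset.univ.filter fun u => c u v = false).card = a := by
          have h := Finset.card_filter_add_card_filter_not
            (s := (Finset.univ : Finset (Fin a))) (p := fun u => c u v = true)
          simp only [Bool.not_eq_true] at h
          simpa using h
        omega
    set M : Finset (Fin a) := Finset.univ.filter fun u => c u v = col with hM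
    calc m.choose k ≤ M.card.choose k := Nat.choose_le_choose k hcol
      _ = (Finset.powersetCard k M).card := (Finset.card_powersetCard k M).symm
      _ ≤ (P.filter fun p => ∀ u ∈ p.1, c u v = p.2).card := by
          apply Finset.card_le_card_of_injOn (fun S => (S, col))
          · intro S hS
            obtain ⟨hSM, hScard⟩ := Finset.mem_powersetCard.mp hS
            refine Finset.mem_filter.mpr ⟨?_, ?_⟩
            · exact Finset.mem_product.mpr
                ⟨Finset.mem_powersetCard.mpr ⟨Finset.subset_univ _, hScard⟩,
                  Finset.mem_univ _⟩
            · intro u hu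
              have := hSM hu
              rw [hM] at this
              exact (Finset.mem_filter.mp this).2
          · intro S₁ _ S₂ _ hEq
            exact (Prod.mk.injEq _ _ _ _).mp hEq |>.1
  -- double counting
  have hsum : b * m.choose k ≤ ∑ p ∈ P, g p := by
    have hswap : ∑ p ∈ P, g p
        = ∑ v : Fin b, (P.filter fun p => ∀ u ∈ p.1, c u v = p.2).card := by
      simp only [hg, Finset.card_filter]
      rw [Finset.sum_comm]
    rw [hswap]
    calc b * m.choose k = ∑ _v : Fin b, m.choose k := by
          rw [Finset.sum_const, Finset.card_univ, Fintype.card_fin, smul_eq_mul]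
      _ ≤ ∑ v : Fin b, (P.filter fun p => ∀ u ∈ p.1, c u v = p.2).card :=
          Finset.sum_le_sum fun v _ => key v
  -- pigeonhole
  have hPcard : P.card = a.choose k * 2 := by
    rw [hP, Finset.card_product, Finset.card_powersetCard, Finset.card_univ,
      Fintype.card_fin, Finset.card_univ]
    rfl
  have hPne : P.Nonempty := by
    rw [← Finset.card_pos, hPcard]
    have := Nat.choose_pos hka
    omega
  obtain ⟨p₀, hp₀P, hp₀⟩ : ∃ p ∈ P, ∑ q ∈ P, g q ≤ P.card * g p := by
    apply Finset.exists_le_of_sum_le hPne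
    rw [← Finset.mul_sum, Finset.sum_const, smul_eq_mul]
  -- the main counting inequality over ℕ
  have hmain : b * m.choose k ≤ a.choose k * 2 * g p₀ := by
    calc b * m.choose k ≤ ∑ q ∈ P, g q := hsum
      _ ≤ P.card * g p₀ := hp₀
      _ = a.choose k * 2 * g p₀ := by rw [hPcard]
  -- extract S, T, col
  obtain ⟨hS1, _⟩ := Finset.mem_product.mp hp₀P
  obtain ⟨_, hScard⟩ := Finset.mem_powersetCard.mp hS1
  refine ⟨p₀.1, Finset.univ.filter fun v => ∀ u ∈ p₀.1, c u v = p₀.2, p₀.2, hScard, ?_, ?_⟩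
  swap
  · intro u hu v hv
    exact (Finset.mem_filter.mp hv).2 u hu
  -- now the analytic inequality
  have hk1 : 1 ≤ k := hk
  have hE1 : (1 : ℝ) ≤ Real.exp 1 := by
    have := Real.add_one_le_exp (1 : ℝ); linarith
  have hE2 : (2 : ℝ) ≤ Real.exp 1 := by
    have := Real.add_one_le_exp (1 : ℝ); linarith
  -- real casts
  set E : ℝ := Real.exp 1 with hE
  have hF : (0 : ℝ) < (k.factorial : ℝ) := by exact_mod_cast k.factorial_pos
  have hK : (0 : ℝ) < (k : ℝ) := by exact_mod_cast hk
  -- `(a.choose k) * k! ≤ a ^ k` over ℕ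
  have hCa : (a.choose k : ℝ) * k.factorial ≤ (a : ℝ) ^ k := by
    have := Nat.descFactorial_le_pow a k
    rw [Nat.descFactorial_eq_factorial_mul_choose] at this
    have : (k.factorial * a.choose k : ℝ) ≤ ((a : ℝ)) ^ k := by exact_mod_cast this
    linarith [this]
  -- `m ^ k ≤ (m.choose k) * k ^ k` over ℕ
  have hCm : (m : ℝ) ^ k ≤ (m.choose k : ℝ) * (k : ℝ) ^ k := by
    have h1 := aux_pow_mul_factorial_le m k hkm
    rw [Nat.descFactorial_eq_factorial_mul_choose] at h1
    have h2 : m ^ k * k.factorial ≤ k.factorial * (m.choose k * k ^ k) := by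
      calc m ^ k * k.factorial ≤ k.factorial * m.choose k * k ^ k := h1
        _ = k.factorial * (m.choose k * k ^ k) := by ring
    have h3 : k.factorial * m ^ k ≤ k.factorial * (m.choose k * k ^ k) := by
      linarith [h2, Nat.mul_comm (m ^ k) k.factorial]
    have h4 : m ^ k ≤ m.choose k * k ^ k := Nat.le_of_mul_le_mul_left h3 k.factorial_pos
    exact_mod_cast h4
  -- `a / 2 ≤ m` over ℝ
  have hm2 : (a : ℝ) / 2 ≤ (m : ℝ) := by
    have h1 : (a / 2 : ℕ) ≤ a := Nat.div_le_self a 2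
    have h2 : (m : ℝ) = (a : ℝ) - ((a / 2 : ℕ) : ℝ) := by
      rw [hm]; push_cast [Nat.cast_sub h1]; ring
    have h3 : ((a / 2 : ℕ) : ℝ) ≤ (a : ℝ) / 2 := by
      rw [le_div_iff₀ (by norm_num)]
      exact_mod_cast Nat.div_mul_le_self a 2
    linarith
  have hApos : (0 : ℝ) < (a : ℝ) := by exact_mod_cast ha
  -- `(a/2)^k ≤ m^k`
  have hm3 : ((a : ℝ) / 2) ^ k ≤ (m : ℝ) ^ k := pow_le_pow_left₀ (by positivity) hm2 k
  -- `2 * k^k ≤ E^k * k!`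
  have hkk : 2 * (k : ℝ) ^ k ≤ E ^ k * k.factorial := by
    have h1 := aux_pow_le_exp_mul_factorial k hk1
    have h2 : E ^ k = Real.exp ((k : ℝ) - 1) * E := by
      rw [hE, ← Real.exp_nat_mul, mul_one, ← Real.exp_add]
      congr 1
      ring
    rw [h2]
    have h3 : Real.exp ((k : ℝ) - 1) * 2 ≤ Real.exp ((k : ℝ) - 1) * E :=
      mul_le_mul_of_nonneg_left hE2 (Real.exp_pos _).le
    calc 2 * (k : ℝ) ^ k ≤ 2 * (Real.exp ((k : ℝ) - 1) * k.factorial) := by linarith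
      _ = (Real.exp ((k : ℝ) - 1) * 2) * k.factorial := by ring
      _ ≤ (Real.exp ((k : ℝ) - 1) * E) * k.factorial := by
          apply mul_le_mul_of_nonneg_right h3 hF.le
  -- `2 * a.choose k ≤ (2E)^k * m.choose k`
  have hmain2 : 2 * (a.choose k : ℝ) ≤ (2 * E) ^ k * (m.choose k : ℝ) := by
    have hKk : (0 : ℝ) < (k : ℝ) ^ k := by positivity
    rw [← mul_le_mul_iff_of_pos_right (mul_pos hF hKk)]
    have step1 : 2 * (a.choose k : ℝ) * (k.factorial * (k : ℝ) ^ k)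
        ≤ 2 * (a : ℝ) ^ k * (k : ℝ) ^ k := by
      have := mul_le_mul_of_nonneg_right hCa hKk.le
      nlinarith [this]
    have step2 : 2 * (a : ℝ) ^ k * (k : ℝ) ^ k ≤ (a : ℝ) ^ k * (E ^ k * k.factorial) := by
      have h := mul_le_mul_of_nonneg_left hkk (by positivity : (0 : ℝ) ≤ (a : ℝ) ^ k)
      nlinarith [h]
    have step3 : (a : ℝ) ^ k * (E ^ k * k.factorial)
        ≤ (2 * E) ^ k * (m.choose k : ℝ) * (k.factorial * (k : ℝ) ^ k) := by
      have hmm : (a : ℝ) ^ k * E ^ k ≤ (2 * E) ^ k * ((m.choose k : ℝ) * (k : ℝ) ^ k) := by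
        calc (a : ℝ) ^ k * E ^ k = (2 * E) ^ k * ((a : ℝ) / 2) ^ k := by
              rw [mul_pow, div_pow]
              field_simp
          _ ≤ (2 * E) ^ k * (m : ℝ) ^ k := by
              apply mul_le_mul_of_nonneg_left hm3 (by positivity)
          _ ≤ (2 * E) ^ k * ((m.choose k : ℝ) * (k : ℝ) ^ k) := by
              apply mul_le_mul_of_nonneg_left hCm (by positivity)
      nlinarith [mul_le_mul_of_nonneg_right hmm hF.le]
    linarith
  -- finish
  have hTnat : (b : ℝ) * (m.choose k : ℝ) ≤ (a.choose k : ℝ) * 2 * (g p₀ : ℝ) := by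
    exact_mod_cast hmain
  have hCmpos : (0 : ℝ) < (m.choose k : ℝ) := by exact_mod_cast Nat.choose_pos hkm
  have hgnn : (0 : ℝ) ≤ (g p₀ : ℝ) := by positivity
  have h2E : (0 : ℝ) < (2 * E) ^ k := by positivity
  rw [ge_iff_le, div_le_iff₀ h2E]
  -- b ≤ g p₀ * (2E)^k
  have hchain : (b : ℝ) * (m.choose k : ℝ) ≤ (2 * E) ^ k * (m.choose k : ℝ) * (g p₀ : ℝ) := by
    calc (b : ℝ) * (m.choose k : ℝ) ≤ (a.choose k : ℝ) * 2 * (g p₀ : ℝ) := hTnat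
      _ = 2 * (a.choose k : ℝ) * (g p₀ : ℝ) := by ring
      _ ≤ (2 * E) ^ k * (m.choose k : ℝ) * (g p₀ : ℝ) := by
          apply mul_le_mul_of_nonneg_right hmain2 hgnn
  have hfin : (b : ℝ) ≤ (2 * E) ^ k * (g p₀ : ℝ) := by
    have heq : (2 * E) ^ k * (m.choose k : ℝ) * (g p₀ : ℝ)
        = ((2 * E) ^ k * (g p₀ : ℝ)) * (m.choose k : ℝ) := by ring
    have h' : (b : ℝ) * (m.choose k : ℝ)
        ≤ ((2 * E) ^ k * (g p₀ : ℝ)) * (m.choose k : ℝ) := by linarith [hchain, heq]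
    exact le_of_mul_le_mul_right h' hCmpos
  have heq2 : (g p₀ : ℝ) * (2 * E) ^ k = (2 * E) ^ k * (g p₀ : ℝ) := by ring
  linarith [hfin, heq2]
end

section
/- There exists an absolute constant C' > 0 such that the following holds for every δ ∈ (0,1/2) and every positive integer t. Let the edges of K_n be 2-coloured with red and blue and let A, B be two disjoint vertex sets such that neither A nor B contains a red clique of size t, and such that the colouring contains no induced copy of K_{t,t} in red (i.e., no 2t vertices on which the red edges form exactly a complete bipartite graph K_{t,t}). Then, provided |A|, |B| ≥ δ^{-C't}, we have e_r(A,B) ≤ δ^{20}|A||B|. -/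
open Finset

/-- A 2-colouring `c` (with `true` = red, `false` = blue) of a complete graph on `V`
contains an induced copy of `K_{t,t}` in colour `col`. -/
def HasInducedKtt {V : Type*} [DecidableEq V] (c : V → V → Bool) (t : ℕ) (col : Bool) : Prop :=
  ∃ S T : Finset V, Disjoint S T ∧ S.card = t ∧ T.card = t ∧
    (∀ u ∈ S, ∀ v ∈ T, c u v = col) ∧
    (∀ u ∈ S, ∀ v ∈ S, u ≠ v → c u v = !col) ∧
    (∀ u ∈ T, ∀ v ∈ T, u ≠ v → c u v = !col)

section Aux

lemma ramsey_aux {V : Type*} [DecidableEq V] (c : V → V → Bool)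
    (hc : ∀ u v, c u v = c v u) :
    ∀ (N p q : ℕ) (X : Finset V), p + q ≤ N → 2 ^ (p + q) ≤ X.card →
      (∃ K ⊆ X, K.card = p ∧ ∀ u ∈ K, ∀ v ∈ K, u ≠ v → c u v = true) ∨
      (∃ K ⊆ X, K.card = q ∧ ∀ u ∈ K, ∀ v ∈ K, u ≠ v → c u v = false) := by
  intro N
  induction N with
  | zero =>
    intro p q X hN _
    have hp : p = 0 := by omega
    subst hp
    exact Or.inl ⟨∅, empty_subset _, card_empty, by simp⟩
  | succ N ih =>
    intro p q X hN hX
    rcases Nat.eq_zero_or_pos p with hp | hp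
    · subst hp
      exact Or.inl ⟨∅, empty_subset _, card_empty, by simp⟩
    rcases Nat.eq_zero_or_pos q with hq | hq
    · subst hq
      exact Or.inr ⟨∅, empty_subset _, card_empty, by simp⟩
    obtain ⟨p', rfl⟩ : ∃ p', p = p' + 1 := ⟨p - 1, by omega⟩
    obtain ⟨q', rfl⟩ : ∃ q', q = q' + 1 := ⟨q - 1, by omega⟩
    have hXne : X.Nonempty := by
      rw [← card_pos]
      calc 0 < 2 ^ (p' + 1 + (q' + 1)) := Nat.pow_pos (by norm_num)
        _ ≤ X.card := hX
    obtain ⟨v, hv⟩ := hXne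
    set R := (X.erase v).filter (fun u => c v u = true) with hR
    set Bl := (X.erase v).filter (fun u => ¬ (c v u = true)) with hBl
    have hsplit : R.card + Bl.card = X.card - 1 := by
      rw [hR, hBl, card_filter_add_card_filter_not, card_erase_of_mem hv]
    have hcase : 2 ^ (p' + (q' + 1)) ≤ R.card ∨ 2 ^ (p' + 1 + q') ≤ Bl.card := by
      by_contra hcon
      push_neg at hcon
      have h2 : 2 ^ (p' + 1 + (q' + 1)) = 2 ^ (p' + (q' + 1)) + 2 ^ (p' + 1 + q') := by
        have e1 : p' + 1 + (q' + 1) = (p' + (q' + 1)) + 1 := by omega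
        have e2 : p' + 1 + q' = p' + (q' + 1) := by omega
        rw [e1, e2, pow_succ]
        omega
      omega
    rcases hcase with hcase | hcase
    · rcases ih p' (q' + 1) R (by omega) hcase with ⟨K, hKR, hKc, hKred⟩ | ⟨K, hKR, hKc, hKblue⟩
      · -- extend red clique with v
        have hKX : K ⊆ X := hKR.trans ((filter_subset _ _).trans (erase_subset _ _))
        have hvK : v ∉ K := fun h => (mem_erase.mp (mem_of_mem_filter _ (hKR h))).1 rfl
        refine Or.inl ⟨insert v K, ?_, ?_, ?_⟩
        · exact insert_subset hv hKX
        · rw [card_insert_of_notMem hvK, hKc]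
        · have hvu : ∀ u ∈ K, c v u = true := fun u hu => (mem_filter.mp (hKR hu)).2
          intro x hx y hy hxy
          rcases mem_insert.mp hx with hx' | hx'
          · rcases mem_insert.mp hy with hy' | hy'
            · exact absurd (hx'.trans hy'.symm) hxy
            · rw [hx']; exact hvu y hy'
          · rcases mem_insert.mp hy with hy' | hy'
            · rw [hy', hc]; exact hvu x hx'
            · exact hKred x hx' y hy' hxy
      · exact Or.inr ⟨K, hKR.trans ((filter_subset _ _).trans (erase_subset _ _)), hKc, hKblue⟩
    · rcases ih (p' + 1) q' Bl (by omega) hcase with ⟨K, hKR, hKc, hKred⟩ | ⟨K, hKR, hKc, hKblue⟩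
      · exact Or.inl ⟨K, hKR.trans ((filter_subset _ _).trans (erase_subset _ _)), hKc, hKred⟩
      · have hKX : K ⊆ X := hKR.trans ((filter_subset _ _).trans (erase_subset _ _))
        have hvK : v ∉ K := fun h => (mem_erase.mp (mem_of_mem_filter _ (hKR h))).1 rfl
        refine Or.inr ⟨insert v K, insert_subset hv hKX, ?_, ?_⟩
        · rw [card_insert_of_notMem hvK, hKc]
        · have hvu : ∀ u ∈ K, c v u = false := by
            intro u hu
            have := (mem_filter.mp (hKR hu)).2
            simpa using this
          intro x hx y hy hxy
          rcases mem_insert.mp hx with hx' | hx'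
          · rcases mem_insert.mp hy with hy' | hy'
            · exact absurd (hx'.trans hy'.symm) hxy
            · rw [hx']; exact hvu y hy'
          · rcases mem_insert.mp hy with hy' | hy'
            · rw [hy', hc]; exact hvu x hx'
            · exact hKblue x hx' y hy' hxy

lemma drc_main {V : Type*} [Fintype V] [DecidableEq V] (c : V → V → Bool)
    (hcs : ∀ u v, c u v = c v u) (A B : Finset V) (hAB : Disjoint A B)
    (t r : ℕ) (ht : 0 < t) (hAne : A.Nonempty)
    (hA : ¬∃ K ⊆ A, K.card = t ∧ ∀ u ∈ K, ∀ v ∈ K, u ≠ v → c u v = true)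
    (hB : ¬∃ K ⊆ B, K.card = t ∧ ∀ u ∈ K, ∀ v ∈ K, u ≠ v → c u v = true)
    (hbig : (A.card : ℝ) ^ t * ((2:ℝ) ^ (t + t)) ^ r + (2:ℝ) ^ (t + t) * (B.card : ℝ) ^ r
      < ∑ x ∈ A, (((B.filter fun z => c x z = true).card : ℝ)) ^ r) :
    HasInducedKtt c t true := by
  classical
  set s : ℕ := 2 ^ (t + t) with hs
  set Nb : Finset V → Finset V := fun S => B.filter fun z => ∀ x ∈ S, c x z = true with hNb
  set U : (Fin r → V) → Finset V := fun y => A.filter fun x => ∀ i, c x (y i) = true with hU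
  set Y : Finset (Fin r → V) := Fintype.piFinset fun _ => B with hY
  set badA : Finset (Finset V) := (A.powersetCard t).filter fun S => (Nb S).card < s with hbadA
  -- counting identity 1
  have hS1 : ∑ y ∈ Y, ((U y).card : ℝ)
      = ∑ x ∈ A, (((B.filter fun z => c x z = true).card : ℝ)) ^ r := by
    have h0 : ∑ y ∈ Y, (U y).card
        = ∑ x ∈ A, ((B.filter fun z => c x z = true).card) ^ r := by
      calc ∑ y ∈ Y, (U y).card
          = ∑ y ∈ Y, ∑ x ∈ A, (if (∀ i, c x (y i) = true) then 1 else 0) :=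
            sum_congr rfl fun y _ => card_filter _ _
        _ = ∑ x ∈ A, ∑ y ∈ Y, (if (∀ i, c x (y i) = true) then 1 else 0) := sum_comm
        _ = _ := ?_
      refine sum_congr rfl fun x _ => ?_
      rw [← card_filter]
      have hfil : Y.filter (fun y => ∀ i, c x (y i) = true)
          = Fintype.piFinset (fun _ : Fin r => B.filter fun z => c x z = true) := by
        ext y
        simp only [hY, mem_filter, Fintype.mem_piFinset, mem_filter]
        aesop
      rw [hfil, Fintype.card_piFinset_const]
    exact_mod_cast h0
  -- counting bound 2
  have hS2 : ∑ y ∈ Y, ((badA.filter fun S => S ⊆ U y).card : ℝ)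
      ≤ (A.card : ℝ) ^ t * ((s : ℝ)) ^ r := by
    have h0 : ∑ y ∈ Y, (badA.filter fun S => S ⊆ U y).card ≤ A.card ^ t * s ^ r := by
      have hstep : ∑ y ∈ Y, (badA.filter fun S => S ⊆ U y).card
          = ∑ S ∈ badA, (Y.filter fun y => S ⊆ U y).card := by
        calc ∑ y ∈ Y, (badA.filter fun S => S ⊆ U y).card
            = ∑ y ∈ Y, ∑ S ∈ badA, (if S ⊆ U y then 1 else 0) :=
              sum_congr rfl fun y _ => card_filter _ _
          _ = ∑ S ∈ badA, ∑ y ∈ Y, (if S ⊆ U y then 1 else 0) := sum_comm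
          _ = _ := sum_congr rfl fun S _ => (card_filter _ _).symm
      rw [hstep]
      have hterm : ∀ S ∈ badA, (Y.filter fun y => S ⊆ U y).card ≤ s ^ r := by
        intro S hS
        obtain ⟨hSmem, hSbad⟩ := mem_filter.mp hS
        obtain ⟨hSA, hScard⟩ := mem_powersetCard.mp hSmem
        have hfil : Y.filter (fun y => S ⊆ U y)
            = Fintype.piFinset (fun _ : Fin r => Nb S) := by
          ext y
          simp only [hY, mem_filter, Fintype.mem_piFinset, hNb, hU, subset_iff, mem_filter]
          constructor
          · rintro ⟨h1, h2⟩ i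
            exact ⟨h1 i, fun x hx => (h2 hx).2 i⟩
          · intro h
            exact ⟨fun i => (h i).1, fun x hx => ⟨hSA hx, fun i => (h i).2 x hx⟩⟩
        rw [hfil, Fintype.card_piFinset_const]
        exact Nat.pow_le_pow_left (le_of_lt hSbad) r
      calc ∑ S ∈ badA, (Y.filter fun y => S ⊆ U y).card ≤ ∑ _S ∈ badA, s ^ r :=
            sum_le_sum hterm
        _ = badA.card * s ^ r := by rw [sum_const, smul_eq_mul]
        _ ≤ A.card ^ t * s ^ r := by
            apply Nat.mul_le_mul_right
            calc badA.card ≤ (A.powersetCard t).card := card_le_card (filter_subset _ _)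
              _ = A.card.choose t := card_powersetCard _ _
              _ ≤ A.card ^ t := Nat.choose_le_pow _ _
    calc ∑ y ∈ Y, ((badA.filter fun S => S ⊆ U y).card : ℝ)
        = ((∑ y ∈ Y, (badA.filter fun S => S ⊆ U y).card : ℕ) : ℝ) := by push_cast; rfl
      _ ≤ ((A.card ^ t * s ^ r : ℕ) : ℝ) := by exact_mod_cast h0
      _ = (A.card : ℝ) ^ t * (s : ℝ) ^ r := by push_cast; rfl
  -- pigeonhole
  have hYcard : Y.card = B.card ^ r := by
    rw [hY, Fintype.card_piFinset_const]
  have hsum : ∑ y ∈ Y, (((badA.filter fun S => S ⊆ U y).card : ℝ) + (s:ℝ))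
      < ∑ y ∈ Y, ((U y).card : ℝ) := by
    rw [sum_add_distrib, sum_const, nsmul_eq_mul, hYcard, hS1]
    have hscast : (s : ℝ) = (2:ℝ) ^ (t + t) := by rw [hs]; push_cast; rfl
    push_cast
    calc ∑ y ∈ Y, ((badA.filter fun S => S ⊆ U y).card : ℝ) + (B.card ^ r : ℝ) * s
        ≤ (A.card : ℝ) ^ t * (s : ℝ) ^ r + (B.card ^ r : ℝ) * s := by linarith [hS2]
      _ = (A.card : ℝ) ^ t * ((2:ℝ) ^ (t + t)) ^ r + (2:ℝ) ^ (t + t) * (B.card : ℝ) ^ r := by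
          rw [hscast]; ring
      _ < _ := hbig
  obtain ⟨y, hyY, hy⟩ := exists_lt_of_sum_lt hsum
  have hyN : (badA.filter fun S => S ⊆ U y).card + s ≤ (U y).card := by
    have : ((badA.filter fun S => S ⊆ U y).card : ℝ) + (s : ℝ) < ((U y).card : ℝ) := hy
    exact_mod_cast this.le
  -- cleaning
  set bd : Finset (Finset V) := badA.filter fun S => S ⊆ U y with hbd
  set g : Finset V → V := fun S => if h : S.Nonempty then h.choose else hAne.choose with hg
  set W : Finset V := U y \ bd.image g with hW
  have hWU : W ⊆ U y := sdiff_subset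
  have hUA : U y ⊆ A := filter_subset _ _
  have hWA : W ⊆ A := hWU.trans hUA
  have hWcard : s ≤ W.card := by
    have h1 : (U y).card - (bd.image g).card ≤ W.card := le_card_sdiff _ _
    have h2 : (bd.image g).card ≤ bd.card := card_image_le
    omega
  have hWgood : ∀ S : Finset V, S ⊆ W → S ∉ badA := by
    intro S hSW hSbad
    have hSU : S ⊆ U y := hSW.trans hWU
    have hSbd : S ∈ bd := mem_filter.mpr ⟨hSbad, hSU⟩
    have hSne : S.Nonempty := by
      have := (mem_powersetCard.mp (mem_filter.mp hSbad).1).2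
      rw [← card_pos, this]; exact ht
    have hgS : g S ∈ S := by
      rw [hg]; simp only [dif_pos hSne]; exact hSne.choose_spec
    have hgW : g S ∈ W := hSW hgS
    have : g S ∉ bd.image g := (mem_sdiff.mp hgW).2
    exact this (mem_image_of_mem g hSbd)
  -- Ramsey inside W
  have hram1 := ramsey_aux c hcs (t + t) t t W le_rfl hWcard
  rcases hram1 with ⟨K, hKW, hKc, hKred⟩ | ⟨Sstar, hSW, hScard, hSblue⟩
  · exact absurd ⟨K, hKW.trans hWA, hKc, hKred⟩ hA
  have hSA : Sstar ⊆ A := hSW.trans hWA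
  have hSnotbad : Sstar ∉ badA := hWgood Sstar hSW
  have hSgood : s ≤ (Nb Sstar).card := by
    by_contra hlt
    push_neg at hlt
    exact hSnotbad (mem_filter.mpr ⟨mem_powersetCard.mpr ⟨hSA, hScard⟩, hlt⟩)
  have hNbB : Nb Sstar ⊆ B := filter_subset _ _
  have hram2 := ramsey_aux c hcs (t + t) t t (Nb Sstar) le_rfl hSgood
  rcases hram2 with ⟨K, hKN, hKc, hKred⟩ | ⟨Tstar, hTN, hTcard, hTblue⟩
  · exact absurd ⟨K, hKN.trans hNbB, hKc, hKred⟩ hB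
  refine ⟨Sstar, Tstar, hAB.mono hSA (hTN.trans hNbB), hScard, hTcard, ?_, ?_, ?_⟩
  · intro u hu v hv
    have := (mem_filter.mp (hTN hv)).2
    exact this u hu
  · intro u hu v hv huv
    rw [Bool.not_true]
    exact hSblue u hu v hv huv
  · intro u hu v hv huv
    rw [Bool.not_true]
    exact hTblue u hu v hv huv

end Aux

set_option maxHeartbeats 2000000 in
/-- There is an absolute constant `C' > 0` such that the following holds for every
`δ ∈ (0, 1/2)` and every positive integer `t`. Let `K_n` be 2-coloured (`true` = red,
`false` = blue) and let `A, B` be disjoint vertex sets, neither containing a red clique of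
size `t`, such that there is no induced copy of `K_{t,t}` in red. Then, provided
`|A|, |B| ≥ δ^{-C't}`, we have `e_r(A,B) ≤ δ^{20}|A||B|`. -/
theorem stmt_7 :
    ∃ C' : ℝ, 0 < C' ∧
      ∀ (δ : ℝ) (t : ℕ), 0 < δ → δ < 1 / 2 → 0 < t →
        ∀ (n : ℕ) (c : Fin n → Fin n → Bool), (∀ u v, c u v = c v u) →
          ∀ A B : Finset (Fin n), Disjoint A B →
            (¬∃ K ⊆ A, K.card = t ∧ ∀ u ∈ K, ∀ v ∈ K, u ≠ v → c u v = true) →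
            (¬∃ K ⊆ B, K.card = t ∧ ∀ u ∈ K, ∀ v ∈ K, u ≠ v → c u v = true) →
            ¬HasInducedKtt c t true →
            (A.card : ℝ) ≥ δ ^ (-(C' * t)) → (B.card : ℝ) ≥ δ ^ (-(C' * t)) →
            (((A ×ˢ B).filter fun e => c e.1 e.2 = true).card : ℝ) ≤
              δ ^ 20 * A.card * B.card := by
  refine ⟨100, by norm_num, ?_⟩
  intro δ t hδ0 hδ2 ht n c hcs A B hAB hA hB hKtt haN hbN
  by_contra hcon
  push_neg at hcon
  set Q : ℝ := δ⁻¹ with hQdef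
  have hδne : δ ≠ 0 := ne_of_gt hδ0
  have hQ2 : 2 < Q := by
    rw [hQdef]
    have h1 : δ * δ⁻¹ = 1 := mul_inv_cancel₀ hδne
    nlinarith [mul_pos (inv_pos.mpr hδ0) (show (0:ℝ) < 1/2 - δ by linarith)]
  have hQ1 : 1 < Q := by linarith
  have hQ0 : 0 < Q := by linarith
  have hrw : ∀ x : ℝ, Q ^ x = δ ^ (-x) := by
    intro x
    rw [hQdef, Real.inv_rpow hδ0.le, ← Real.rpow_neg hδ0.le]
  have ha : Q ^ (100 * (t:ℝ)) ≤ (A.card : ℝ) := by rw [hrw]; exact haN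
  have hb : Q ^ (100 * (t:ℝ)) ≤ (B.card : ℝ) := by rw [hrw]; exact hbN
  have ht1 : (1:ℝ) ≤ (t:ℝ) := by exact_mod_cast ht
  have hApos : (0:ℝ) < A.card := lt_of_lt_of_le (Real.rpow_pos_of_pos hQ0 _) ha
  have hBpos : (0:ℝ) < B.card := lt_of_lt_of_le (Real.rpow_pos_of_pos hQ0 _) hb
  have hAne : A.Nonempty := card_pos.mp (by exact_mod_cast hApos)
  set lam : ℝ := Real.logb Q (A.card) with hlamdef
  have hlam_eq : Q ^ lam = (A.card : ℝ) := Real.rpow_logb hQ0 (ne_of_gt hQ1) hApos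
  have hlam_ge : 100 * (t:ℝ) ≤ lam := by
    rw [← Real.rpow_le_rpow_left_iff hQ1, hlam_eq]; exact ha
  have hlam_pos : (0:ℝ) < lam := by nlinarith
  set r : ℕ := ⌈lam / 30⌉₊ with hrdef
  have hr1 : lam / 30 ≤ (r:ℝ) := Nat.le_ceil _
  have hr2 : (r:ℝ) ≤ lam / 22 := by
    have hceil : ((⌈lam / 30⌉₊ : ℕ) : ℝ) < lam / 30 + 1 :=
      Nat.ceil_lt_add_one (by positivity)
    have h100 : (100:ℝ) ≤ lam := by nlinarith
    rw [hrdef]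
    nlinarith
  have hrt : 3 * t ≤ r := by
    have h3 : (3*(t:ℝ)) ≤ (r:ℝ) := by nlinarith
    exact_mod_cast h3
  have hr0 : 0 < r := by omega
  -- Key 1 : 2 * 2^(t+t) ≤ δ^(20r) * a
  have hKey1 : 2 * (2:ℝ) ^ (t + t) ≤ δ ^ (20 * r) * A.card := by
    have e1 : Q ^ (-(20*(r:ℝ))) = (δ:ℝ) ^ (20*r) := by
      rw [hrw, neg_neg, show (20*(r:ℝ)) = ((20*r : ℕ):ℝ) by push_cast; ring,
        Real.rpow_natCast]
    have e2 : (δ:ℝ) ^ (20*r) * (A.card:ℝ) = Q ^ (lam - 20*(r:ℝ)) := by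
      rw [← e1, ← hlam_eq, ← Real.rpow_add hQ0]
      ring_nf
    rw [e2]
    have h3 : Q ^ ((9*t : ℕ):ℝ) ≤ Q ^ (lam - 20*(r:ℝ)) := by
      rw [Real.rpow_le_rpow_left_iff hQ1]
      push_cast
      nlinarith
    have h4 : (2:ℝ) * 2 ^ (t + t) ≤ Q ^ ((9*t : ℕ):ℝ) := by
      rw [Real.rpow_natCast]
      calc (2:ℝ) * 2 ^ (t + t) = 2 ^ (t + t + 1) := by rw [pow_succ]; ring
        _ ≤ 2 ^ (9*t) := by
            apply pow_le_pow_right₀ (by norm_num)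
            omega
        _ ≤ Q ^ (9*t) := pow_le_pow_left₀ (by norm_num) hQ2.le _
    linarith
  -- Key 2 : a^t * (2^(t+t))^r ≤ b^r
  have hKey2 : (A.card:ℝ) ^ t * ((2:ℝ) ^ (t + t)) ^ r ≤ (B.card:ℝ) ^ r := by
    have e1 : (A.card:ℝ) ^ t = Q ^ (lam * t) := by
      rw [← hlam_eq, ← Real.rpow_natCast (Q ^ lam) t, ← Real.rpow_mul hQ0.le]
    have h4Q : (2:ℝ) ^ (t + t) ≤ Q ^ (t + t) := pow_le_pow_left₀ (by norm_num) hQ2.le _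
    have e2 : ((2:ℝ) ^ (t + t)) ^ r ≤ Q ^ (((t + t)*r : ℕ):ℝ) := by
      rw [Real.rpow_natCast]
      calc ((2:ℝ) ^ (t + t)) ^ r ≤ (Q ^ (t + t)) ^ r :=
            pow_le_pow_left₀ (by positivity) h4Q r
        _ = Q ^ ((t + t)*r) := by rw [← pow_mul]
    have e3 : Q ^ (lam * t + ((t + t)*r : ℕ)) ≤ Q ^ ((100 * (t:ℝ)) * r) := by
      rw [Real.rpow_le_rpow_left_iff hQ1]
      have ht0 : (0:ℝ) ≤ (t:ℝ) := by positivity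
      have hlam30 : lam ≤ 30 * r := by linarith
      have h1 : lam * t ≤ (30 * r) * t := mul_le_mul_of_nonneg_right hlam30 ht0
      have h2 : (0:ℝ) ≤ (t:ℝ) * r := by positivity
      push_cast
      nlinarith [h1, h2]
    have e4 : Q ^ ((100 * (t:ℝ)) * r) ≤ (B.card:ℝ) ^ r := by
      rw [Real.rpow_mul hQ0.le, Real.rpow_natCast]
      exact pow_le_pow_left₀ (Real.rpow_nonneg hQ0.le _) hb r
    calc (A.card:ℝ) ^ t * ((2:ℝ) ^ (t + t)) ^ r
        ≤ Q ^ (lam * t) * Q ^ (((t + t)*r : ℕ):ℝ) := by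
          rw [e1]
          exact mul_le_mul_of_nonneg_left e2 (Real.rpow_nonneg hQ0.le _)
      _ = Q ^ (lam * t + ((t + t)*r : ℕ)) := (Real.rpow_add hQ0 _ _).symm
      _ ≤ Q ^ ((100 * (t:ℝ)) * r) := e3
      _ ≤ (B.card:ℝ) ^ r := e4
  -- Master inequality
  have hMaster : (A.card:ℝ) ^ t * ((2:ℝ) ^ (t + t)) ^ r + (2:ℝ) ^ (t + t) * (B.card:ℝ) ^ r
      ≤ (A.card:ℝ) * (δ ^ 20 * B.card) ^ r := by
    have h1 : (A.card:ℝ) * (δ ^ 20 * B.card) ^ r = (δ ^ (20*r) * A.card) * (B.card:ℝ) ^ r := by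
      rw [mul_pow, pow_mul]
      ring
    rw [h1]
    have hb0 : (0:ℝ) ≤ (B.card:ℝ) ^ r := by positivity
    have h41 : (1:ℝ) ≤ 2 ^ (t + t) := one_le_pow₀ (by norm_num)
    have h5 : (2 * (2:ℝ) ^ (t + t)) * (B.card:ℝ) ^ r ≤ (δ ^ (20*r) * A.card) * (B.card:ℝ) ^ r :=
      mul_le_mul_of_nonneg_right hKey1 hb0
    nlinarith [hKey2]
  -- Jensen
  set deg : Fin n → ℝ := fun x => ((B.filter fun z => c x z = true).card : ℝ) with hdeg
  have he : (((A ×ˢ B).filter fun e => c e.1 e.2 = true).card : ℝ) = ∑ x ∈ A, deg x := by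
    have h0 : ((A ×ˢ B).filter fun e => c e.1 e.2 = true).card
        = ∑ x ∈ A, (B.filter fun z => c x z = true).card := by
      rw [card_filter, sum_product]
      exact sum_congr rfl fun x _ => (card_filter _ _).symm
    rw [h0]
    push_cast
    rfl
  have hdeg0 : ∀ x ∈ A, 0 ≤ deg x := fun x _ => by rw [hdeg]; positivity
  have hJ : (∑ x ∈ A, deg x) ^ r ≤ (A.card:ℝ) ^ (r - 1) * ∑ x ∈ A, (deg x) ^ r := by
    have := pow_sum_le_card_mul_sum_pow hdeg0 (r - 1)
    rwa [show r - 1 + 1 = r by omega] at this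
  have hlt : δ ^ 20 * (A.card:ℝ) * B.card < ∑ x ∈ A, deg x := by rw [← he]; exact hcon
  have hpos20 : (0:ℝ) ≤ δ ^ 20 * (A.card:ℝ) * B.card := by positivity
  have hpowlt : (δ ^ 20 * (A.card:ℝ) * B.card) ^ r < (∑ x ∈ A, deg x) ^ r :=
    pow_lt_pow_left₀ hlt hpos20 (by omega)
  have hrr : (A.card:ℝ) ^ r = (A.card:ℝ) ^ (r-1) * A.card := by
    conv_lhs => rw [show r = (r-1)+1 by omega]
    rw [pow_succ]
  have hEq : (δ ^ 20 * (A.card:ℝ) * B.card) ^ r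
      = (A.card:ℝ) ^ (r-1) * ((A.card:ℝ) * (δ ^ 20 * B.card) ^ r) := by
    rw [show δ ^ 20 * (A.card:ℝ) * (B.card:ℝ) = (δ ^ 20 * (B.card:ℝ)) * (A.card:ℝ) by ring,
      mul_pow, hrr]
    ring
  have hfinal : (A.card:ℝ) * (δ ^ 20 * B.card) ^ r < ∑ x ∈ A, (deg x) ^ r := by
    have hcancel : (A.card:ℝ) ^ (r-1) * ((A.card:ℝ) * (δ ^ 20 * B.card) ^ r)
        < (A.card:ℝ) ^ (r-1) * ∑ x ∈ A, (deg x) ^ r := by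
      calc (A.card:ℝ) ^ (r-1) * ((A.card:ℝ) * (δ ^ 20 * B.card) ^ r)
          = (δ ^ 20 * (A.card:ℝ) * B.card) ^ r := hEq.symm
        _ < (∑ x ∈ A, deg x) ^ r := hpowlt
        _ ≤ (A.card:ℝ) ^ (r-1) * ∑ x ∈ A, (deg x) ^ r := hJ
    exact lt_of_mul_lt_mul_left hcancel (by positivity)
  have hbig : (A.card : ℝ) ^ t * ((2:ℝ) ^ (t + t)) ^ r + (2:ℝ) ^ (t + t) * (B.card : ℝ) ^ r
      < ∑ x ∈ A, (((B.filter fun z => c x z = true).card : ℝ)) ^ r := by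
    calc (A.card : ℝ) ^ t * ((2:ℝ) ^ (t + t)) ^ r + (2:ℝ) ^ (t + t) * (B.card : ℝ) ^ r
        ≤ (A.card:ℝ) * (δ ^ 20 * B.card) ^ r := hMaster
      _ < ∑ x ∈ A, (deg x) ^ r := hfinal
  exact hKtt (drc_main c hcs A B hAB t r ht hAne hA hB hbig)
end

section
/- There exists an absolute constant C' > 0 such that the following holds. Let 0 < ε < 1/4, let t be a positive integer, and let n be sufficiently large in terms of ε and t (n ≥ ε^{-Ct} for a sufficiently large absolute constant C suffices). Suppose the edges of K_n are 2-coloured with red and blue so that every vertex has at least n/4 + εn red neighbours and at least n/4 + εn blue neighbours, and suppose the colouring contains no induced copy of K_{t,t} in either colour. Then there exist two disjoint vertex sets S^r and S^b, each of size at least ε^{-C't}, such that S^r contains no red clique of size t and S^b contains no blue clique of size t. -/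
open Finset

private lemma numeric_aux (β nn : ℝ) (t : ℕ) (ht : 1 ≤ t) (hβ : (4:ℝ)^t ≤ β)
    (hn : β ^ 100 ≤ nn) :
    nn ^ t * (6*β) ^ (4*t) + nn ^ (4*t) * (6*β) ≤ nn * (nn/4) ^ (4*t) := by
  have hβ4 : (4:ℝ) ≤ β := by
    calc (4:ℝ) = 4 ^ 1 := (pow_one 4).symm
    _ ≤ 4 ^ t := pow_le_pow_right₀ (by norm_num) ht
    _ ≤ β := hβ
  have hβ0 : (0:ℝ) < β := by linarith
  have hβ1 : (1:ℝ) ≤ β := by linarith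
  have hn1 : (1:ℝ) ≤ nn := le_trans (one_le_pow₀ hβ1) hn
  have hn0 : (0:ℝ) < nn := by linarith
  have h4s : (4:ℝ) ^ (4*t) ≤ β ^ 4 := by
    calc (4:ℝ) ^ (4*t) = ((4:ℝ)^t) ^ 4 := by rw [← pow_mul, mul_comm]
    _ ≤ β ^ 4 := pow_le_pow_left₀ (by positivity) hβ 4
  have keyA : 12 * β * (4:ℝ) ^ (4*t) ≤ nn := by
    have h12 : (12:ℝ) ≤ β ^ 2 := by nlinarith
    calc 12 * β * (4:ℝ) ^ (4*t) ≤ β^2 * β * β^4 := by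
          apply mul_le_mul (mul_le_mul h12 le_rfl hβ0.le (by positivity)) h4s (by positivity) (by positivity)
    _ = β ^ 7 := by ring
    _ ≤ β ^ 100 := pow_le_pow_right₀ hβ1 (by norm_num)
    _ ≤ nn := hn
  have keyB : 2 * ((24*β) ^ (4*t)) ≤ nn ^ (3*t+1) := by
    have hb3 : (24:ℝ) ≤ β ^ 3 := by nlinarith [pow_le_pow_left₀ (by norm_num : (0:ℝ) ≤ 4) hβ4 3]
    have h24 : (24:ℝ) * β ≤ β ^ 4 := by nlinarith
    have h1 : ((24:ℝ)*β) ^ (4*t) ≤ β ^ (16*t) := by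
      calc ((24:ℝ)*β) ^ (4*t) ≤ (β^4) ^ (4*t) := pow_le_pow_left₀ (by positivity) h24 _
      _ = β ^ (16*t) := by rw [← pow_mul]; ring_nf
    have h2 : (2:ℝ) ≤ β := by linarith
    have h3 : β ^ (16*t+1) ≤ nn ^ (3*t+1) := by
      calc β ^ (16*t+1) ≤ β ^ (100*(3*t+1)) := pow_le_pow_right₀ hβ1 (by omega)
      _ = (β ^ 100) ^ (3*t+1) := by rw [← pow_mul]
      _ ≤ nn ^ (3*t+1) := pow_le_pow_left₀ (by positivity) hn _
    calc 2 * ((24*β) ^ (4*t)) ≤ β * β ^ (16*t) := by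
          apply mul_le_mul h2 h1 (by positivity) hβ0.le
    _ = β ^ (16*t+1) := by rw [pow_succ]; ring
    _ ≤ nn ^ (3*t+1) := h3
  have h4pos : (0:ℝ) < (4:ℝ) ^ (4*t) := by positivity
  have e2 : nn ^ t * (24*β)^(4*t) * 2 ≤ nn ^ (4*t+1) := by
    have hsplit : nn ^ (4*t+1) = nn ^ t * nn ^ (3*t+1) := by rw [← pow_add]; ring_nf
    rw [hsplit]
    calc nn ^ t * (24*β)^(4*t) * 2 = nn ^ t * (2 * (24*β)^(4*t)) := by ring
    _ ≤ nn ^ t * nn ^ (3*t+1) := mul_le_mul_of_nonneg_left keyB (by positivity)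
  have e3 : nn ^ (4*t) * (6*β) * (4:ℝ)^(4*t) * 2 ≤ nn ^ (4*t+1) := by
    have hsplit : nn ^ (4*t+1) = nn ^ (4*t) * nn := pow_succ nn (4*t)
    rw [hsplit]
    calc nn ^ (4*t) * (6*β) * 4^(4*t) * 2 = nn ^ (4*t) * (12 * β * 4^(4*t)) := by ring
    _ ≤ nn ^ (4*t) * nn := mul_le_mul_of_nonneg_left keyA (by positivity)
  have main : (nn ^ t * (6*β) ^ (4*t) + nn ^ (4*t) * (6*β)) * 4 ^ (4*t) ≤ nn ^ (4*t+1) := by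
    have e1 : nn ^ t * (6*β) ^ (4*t) * (4:ℝ)^(4*t) = nn ^ t * (24*β) ^ (4*t) := by
      rw [mul_assoc, ← mul_pow]; ring_nf
    calc (nn ^ t * (6*β) ^ (4*t) + nn ^ (4*t) * (6*β)) * 4 ^ (4*t)
        = nn ^ t * (6*β) ^ (4*t) * 4^(4*t) + nn ^ (4*t) * (6*β) * 4^(4*t) := by ring
    _ = nn ^ t * (24*β)^(4*t) + nn ^ (4*t) * (6*β) * 4^(4*t) := by rw [e1]
    _ ≤ nn ^ (4*t+1) / 2 + nn ^ (4*t+1) / 2 := by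
        apply add_le_add (by linarith) (by linarith)
    _ = nn ^ (4*t+1) := by ring
  have hfin : nn ^ t * (6*β) ^ (4*t) + nn ^ (4*t) * (6*β) ≤ nn ^ (4*t+1) / 4 ^ (4*t) :=
    (le_div_iff₀ h4pos).mpr main
  calc nn ^ t * (6*β) ^ (4*t) + nn ^ (4*t) * (6*β) ≤ nn ^ (4*t+1) / 4^(4*t) := hfin
  _ = nn * (nn/4)^(4*t) := by rw [div_pow, pow_succ]; ring

private lemma count_pi {n s : ℕ} (A : Finset (Fin n)) :
    (univ.filter (fun x : Fin s → Fin n => ∀ i, x i ∈ A)).card = A.card ^ s := by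
  classical
  have h : (univ.filter (fun x : Fin s → Fin n => ∀ i, x i ∈ A))
      = Fintype.piFinset (fun _ : Fin s => A) := by
    ext x; simp [Fintype.mem_piFinset]
  rw [h, Fintype.card_piFinset]
  simp

private def Dset {n : ℕ} (c : Fin n → Fin n → Bool) (a : Bool) (v : Fin n) : Finset (Fin n) :=
  univ.filter (fun u => c v u = a ∧ v ≠ u)

private lemma mem_Dset {n : ℕ} (c : Fin n → Fin n → Bool) (a : Bool) (v u : Fin n) :
    u ∈ Dset c a v ↔ (c v u = a ∧ v ≠ u) := by simp [Dset]

private def ComSet {n : ℕ} (c : Fin n → Fin n → Bool) (a : Bool) (U : Finset (Fin n)) :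
    Finset (Fin n) := univ.filter (fun u => ∀ w ∈ U, u ∈ Dset c a w)

private lemma mem_ComSet {n : ℕ} (c : Fin n → Fin n → Bool) (a : Bool) (U : Finset (Fin n))
    (u : Fin n) : u ∈ ComSet c a U ↔ ∀ w ∈ U, u ∈ Dset c a w := by simp [ComSet]

private def Wset {n m : ℕ} (c : Fin n → Fin n → Bool) (a : Bool) (x : Fin m → Fin n) :
    Finset (Fin n) := univ.filter (fun v => ∀ i, x i ∈ Dset c a v)

private lemma mem_Wset {n m : ℕ} (c : Fin n → Fin n → Bool) (a : Bool) (x : Fin m → Fin n)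
    (v : Fin n) : v ∈ Wset c a x ↔ ∀ i, x i ∈ Dset c a v := by simp [Wset]

private lemma subset_Wset {n m : ℕ} (c : Fin n → Fin n → Bool) (a : Bool) (x : Fin m → Fin n)
    (U : Finset (Fin n)) : U ⊆ Wset c a x ↔ ∀ i, x i ∈ ComSet c a U := by
  constructor
  · intro h i
    rw [mem_ComSet]
    intro w hw
    exact (mem_Wset c a x w).1 (h hw) i
  · intro h w hw
    rw [mem_Wset]
    intro i
    exact (mem_ComSet c a U (x i)).1 (h i) w hw

private lemma claim1 {n m : ℕ} (c : Fin n → Fin n → Bool) (a : Bool) :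
    ∑ x : Fin m → Fin n, (Wset c a x).card = ∑ v : Fin n, (Dset c a v).card ^ m := by
  classical
  calc ∑ x : Fin m → Fin n, (Wset c a x).card
      = ∑ x : Fin m → Fin n, ∑ v : Fin n, if (∀ i, x i ∈ Dset c a v) then 1 else 0 :=
        Finset.sum_congr rfl fun x _ => Finset.card_filter _ _
  _ = ∑ v : Fin n, ∑ x : Fin m → Fin n, if (∀ i, x i ∈ Dset c a v) then 1 else 0 :=
        Finset.sum_comm
  _ = ∑ v : Fin n, (univ.filter (fun x : Fin m → Fin n => ∀ i, x i ∈ Dset c a v)).card :=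
        Finset.sum_congr rfl fun v _ => (Finset.card_filter _ _).symm
  _ = ∑ v : Fin n, (Dset c a v).card ^ m :=
        Finset.sum_congr rfl fun v _ => count_pi _

private lemma claim2 {n m : ℕ} (c : Fin n → Fin n → Bool) (a : Bool)
    (Tb : Finset (Finset (Fin n))) :
    ∑ x : Fin m → Fin n, (Tb.filter (fun U => U ⊆ Wset c a x)).card
      = ∑ U ∈ Tb, (ComSet c a U).card ^ m := by
  classical
  calc ∑ x : Fin m → Fin n, (Tb.filter (fun U => U ⊆ Wset c a x)).card
      = ∑ x : Fin m → Fin n, ∑ U ∈ Tb, if (U ⊆ Wset c a x) then 1 else 0 :=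
        Finset.sum_congr rfl fun x _ => Finset.card_filter _ _
  _ = ∑ U ∈ Tb, ∑ x : Fin m → Fin n, if (U ⊆ Wset c a x) then 1 else 0 :=
        Finset.sum_comm
  _ = ∑ U ∈ Tb, (univ.filter (fun x : Fin m → Fin n => U ⊆ Wset c a x)).card :=
        Finset.sum_congr rfl fun U _ => (Finset.card_filter _ _).symm
  _ = ∑ U ∈ Tb, (ComSet c a U).card ^ m := by
        refine Finset.sum_congr rfl fun U _ => ?_
        have h : (univ.filter (fun x : Fin m → Fin n => U ⊆ Wset c a x))
            = (univ.filter (fun x : Fin m → Fin n => ∀ i, x i ∈ ComSet c a U)) :=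
          Finset.filter_congr fun x _ => subset_Wset c a x U
        rw [h, count_pi]

private lemma exists_free_set {n : ℕ} (ε : ℝ) (t : ℕ) (c : Fin n → Fin n → Bool) (b : Bool)
    (hε0 : 0 < ε) (hε4 : ε < 1/4) (ht : 0 < t) (hn : 0 < n)
    (hbig : (n : ℝ) ≥ ε ^ (-(100 * (t:ℝ))))
    (hsymm : ∀ u v, c u v = c v u)
    (hdeg : ∀ v : Fin n, ((n:ℝ) / 4) ≤ ((univ.filter fun u => u ≠ v ∧ c v u = !b).card : ℝ))
    (hno : ¬ HasInducedKtt c t (!b)) :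
    ∃ S₀ : Finset (Fin n), 4 * ε ^ (-(t:ℝ)) + t + 4 ≤ (S₀.card : ℝ) ∧
      ¬∃ K ⊆ S₀, K.card = t ∧ ∀ u ∈ K, ∀ v ∈ K, u ≠ v → c u v = b := by
  classical
  set a : Bool := !b with hadef
  set β : ℝ := ε ^ (-(t:ℝ)) with hβdef
  set K : ℝ := 4 * β + (t:ℝ) + 4 with hKdef
  clear_value β K
  -- basic numeric facts
  have hεt : (0:ℝ) < ε ^ (t:ℕ) := pow_pos hε0 t
  have hβeq : β = ((ε ^ (t:ℕ) : ℝ))⁻¹ := by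
    rw [hβdef, ← Real.rpow_natCast ε t, ← Real.rpow_neg hε0.le]
  have hβ4t : (4:ℝ) ^ t ≤ β := by
    rw [hβeq]
    have h1 : ε ^ t ≤ (1/4:ℝ) ^ t := pow_le_pow_left₀ hε0.le (by linarith) t
    have h2 : ((1/4:ℝ) ^ t)⁻¹ ≤ (ε ^ t)⁻¹ := inv_anti₀ hεt h1
    calc (4:ℝ)^t = ((1/4:ℝ)^t)⁻¹ := by rw [one_div, inv_pow, inv_inv]
    _ ≤ (ε ^ t)⁻¹ := h2
  have hβ4 : (4:ℝ) ≤ β := by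
    calc (4:ℝ) = 4^1 := (pow_one 4).symm
    _ ≤ 4^t := pow_le_pow_right₀ (by norm_num) ht
    _ ≤ β := hβ4t
  have hβ0 : (0:ℝ) < β := by linarith
  have htβ : (t:ℝ) ≤ β := by
    have h1 : (t:ℝ) ≤ (2:ℝ)^t := by
      have := Nat.lt_two_pow_self (n := t)
      calc (t:ℝ) ≤ ((2^t : ℕ) : ℝ) := by exact_mod_cast this.le
      _ = (2:ℝ)^t := by push_cast; ring
    have h2 : (2:ℝ)^t ≤ (4:ℝ)^t := pow_le_pow_left₀ (by norm_num) (by norm_num) t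
    linarith [hβ4t]
  have hK6 : K ≤ 6 * β := by rw [hKdef]; linarith
  have hK0 : (0:ℝ) < K := by rw [hKdef]; positivity
  have hnβ : β ^ (100:ℕ) ≤ (n:ℝ) := by
    have e : β ^ (100:ℕ) = ε ^ (-(100 * (t:ℝ))) := by
      rw [← Real.rpow_natCast β 100, hβdef, ← Real.rpow_mul hε0.le]
      congr 1
      push_cast
      ring
    rw [e]
    exact hbig
  -- degree bound for Dset
  have hDdeg : ∀ v : Fin n, (n:ℝ)/4 ≤ ((Dset c a v).card : ℝ) := by
    intro v
    have he : Dset c a v = univ.filter (fun u => u ≠ v ∧ c v u = a) := by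
      ext u
      rw [mem_Dset]
      simp only [mem_filter, mem_univ, true_and]
      constructor
      · rintro ⟨h1, h2⟩; exact ⟨h2.symm, h1⟩
      · rintro ⟨h1, h2⟩; exact ⟨h2, h1.symm⟩
    rw [he]
    exact hdeg v
  -- bad family
  set Tbad : Finset (Finset (Fin n)) :=
    (univ.powersetCard t).filter (fun U => ((ComSet c a U).card : ℝ) < K) with hTbad
  -- sum bounds
  have sumW : (n:ℝ) * ((n:ℝ)/4)^(4*t) ≤ ∑ x : Fin (4*t) → Fin n, ((Wset c a x).card : ℝ) := by
    have hcast : (∑ x : Fin (4*t) → Fin n, ((Wset c a x).card:ℝ))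
        = ∑ v : Fin n, ((Dset c a v).card:ℝ) ^ (4*t) := by
      have := claim1 (m := 4*t) c a
      exact_mod_cast congrArg (Nat.cast : ℕ → ℝ) this
    rw [hcast]
    calc (n:ℝ) * ((n:ℝ)/4)^(4*t) = ∑ _v : Fin n, ((n:ℝ)/4)^(4*t) := by
          rw [Finset.sum_const, card_univ, Fintype.card_fin, nsmul_eq_mul]
    _ ≤ ∑ v : Fin n, ((Dset c a v).card:ℝ)^(4*t) :=
          Finset.sum_le_sum fun v _ => pow_le_pow_left₀ (by positivity) (hDdeg v) _
  have sumB : (∑ x : Fin (4*t) → Fin n, ((Tbad.filter (fun U => U ⊆ Wset c a x)).card : ℝ))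
      ≤ (n:ℝ)^t * K^(4*t) := by
    have hcast : (∑ x : Fin (4*t) → Fin n, ((Tbad.filter (fun U => U ⊆ Wset c a x)).card:ℝ))
        = ∑ U ∈ Tbad, ((ComSet c a U).card:ℝ) ^ (4*t) := by
      have := claim2 (m := 4*t) c a Tbad
      exact_mod_cast congrArg (Nat.cast : ℕ → ℝ) this
    rw [hcast]
    calc ∑ U ∈ Tbad, ((ComSet c a U).card:ℝ)^(4*t) ≤ ∑ _U ∈ Tbad, K^(4*t) :=
          Finset.sum_le_sum fun U hU =>
            pow_le_pow_left₀ (by positivity) (le_of_lt (mem_filter.1 hU).2) _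
    _ = (Tbad.card : ℝ) * K^(4*t) := by rw [Finset.sum_const, nsmul_eq_mul]
    _ ≤ (n:ℝ)^t * K^(4*t) := by
          apply mul_le_mul_of_nonneg_right _ (by positivity)
          have h1 : Tbad.card ≤ (univ.powersetCard t : Finset (Finset (Fin n))).card :=
            Finset.card_filter_le _ _
          have h2 : ((univ : Finset (Fin n)).powersetCard t).card = n.choose t := by
            rw [Finset.card_powersetCard, card_univ, Fintype.card_fin]
          have h3 : n.choose t ≤ n ^ t := Nat.choose_le_pow _ _
          have : Tbad.card ≤ n ^ t := by omega
          exact_mod_cast this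
  -- numeric inequality
  have hnum : (n:ℝ)^t * K^(4*t) + (n:ℝ)^(4*t) * K ≤ (n:ℝ) * ((n:ℝ)/4)^(4*t) := by
    have haux := numeric_aux β (n:ℝ) t ht hβ4t hnβ
    have hKK : K^(4*t) ≤ (6*β)^(4*t) := pow_le_pow_left₀ hK0.le hK6 _
    have h1 : (n:ℝ)^t * K^(4*t) ≤ (n:ℝ)^t * (6*β)^(4*t) :=
      mul_le_mul_of_nonneg_left hKK (by positivity)
    have h2 : (n:ℝ)^(4*t) * K ≤ (n:ℝ)^(4*t) * (6*β) :=
      mul_le_mul_of_nonneg_left hK6 (by positivity)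
    linarith
  -- averaging
  have hcardx : ((Fintype.card (Fin (4*t) → Fin n)) : ℝ) = (n:ℝ)^(4*t) := by
    rw [Fintype.card_fun, Fintype.card_fin, Fintype.card_fin]
    push_cast
    ring
  have hex : ∃ x : Fin (4*t) → Fin n,
      K ≤ ((Wset c a x).card:ℝ) - ((Tbad.filter (fun U => U ⊆ Wset c a x)).card:ℝ) := by
    by_contra hcon
    push_neg at hcon
    have hne : Nonempty (Fin (4*t) → Fin n) := ⟨fun _ => ⟨0, hn⟩⟩
    have hlt : ∑ x : Fin (4*t) → Fin n,
        (((Wset c a x).card:ℝ) - ((Tbad.filter (fun U => U ⊆ Wset c a x)).card:ℝ))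
        < ((Fintype.card (Fin (4*t) → Fin n)) : ℝ) * K := by
      calc ∑ x : Fin (4*t) → Fin n,
          (((Wset c a x).card:ℝ) - ((Tbad.filter (fun U => U ⊆ Wset c a x)).card:ℝ))
          < ∑ _x : Fin (4*t) → Fin n, K :=
            Finset.sum_lt_sum_of_nonempty univ_nonempty (fun x _ => hcon x)
      _ = _ := by rw [Finset.sum_const, card_univ, nsmul_eq_mul]
    rw [Finset.sum_sub_distrib, hcardx] at hlt
    linarith
  obtain ⟨x, hx⟩ := hex
  set rep : Finset (Fin n) → Fin n := fun U => if h : U.Nonempty then h.choose else ⟨0, hn⟩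
    with hrep
  set Bx : Finset (Finset (Fin n)) := Tbad.filter (fun U => U ⊆ Wset c a x) with hBx
  set W' : Finset (Fin n) := (Wset c a x) \ (Bx.image rep) with hW'
  have hW'sub : W' ⊆ Wset c a x := sdiff_subset
  have hW'card : K ≤ (W'.card : ℝ) := by
    have h1 : (Wset c a x) ⊆ W' ∪ (Bx.image rep) := by
      intro v hv
      by_cases hv2 : v ∈ Bx.image rep
      · exact mem_union_right _ hv2
      · exact mem_union_left _ (mem_sdiff.2 ⟨hv, hv2⟩)
    have h2 : (Wset c a x).card ≤ W'.card + (Bx.image rep).card :=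
      le_trans (card_le_card h1) (card_union_le _ _)
    have h3 : (Bx.image rep).card ≤ Bx.card := card_image_le
    have h4 : (Wset c a x).card ≤ W'.card + Bx.card := by omega
    have h5 : ((Wset c a x).card : ℝ) ≤ (W'.card : ℝ) + (Bx.card : ℝ) := by exact_mod_cast h4
    linarith
  have hW'good : ∀ U : Finset (Fin n), U ⊆ W' → U.card = t → K ≤ ((ComSet c a U).card : ℝ) := by
    intro U hU hUcard
    by_contra hbad
    push_neg at hbad
    have hUB : U ∈ Bx := by
      rw [hBx]
      refine mem_filter.2 ⟨?_, hU.trans hW'sub⟩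
      rw [hTbad]
      refine mem_filter.2 ⟨?_, hbad⟩
      exact mem_powersetCard.2 ⟨subset_univ U, hUcard⟩
    have hUne : U.Nonempty := card_pos.1 (by omega)
    have hrepU : rep U ∈ U := by
      rw [hrep]
      simp only [dif_pos hUne]
      exact hUne.choose_spec
    have h1 : rep U ∈ W' := hU hrepU
    have h2 : rep U ∈ Bx.image rep := mem_image_of_mem rep hUB
    rw [hW'] at h1
    exact (mem_sdiff.1 h1).2 h2
  by_cases hQ : ∃ Q, Q ⊆ W' ∧ Q.card = t ∧ ∀ u ∈ Q, ∀ v ∈ Q, u ≠ v → c u v = b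
  · obtain ⟨Q, hQ1, hQ2, hQ3⟩ := hQ
    have hQgood := hW'good Q hQ1 hQ2
    refine ⟨ComSet c a Q, by rw [hKdef] at hQgood; linarith, ?_⟩
    rintro ⟨K', hK'1, hK'2, hK'3⟩
    apply hno
    refine ⟨K', Q, ?_, hK'2, hQ2, ?_, ?_, ?_⟩
    · rw [disjoint_left]
      intro u hu huQ
      have h := (mem_ComSet c a Q u).1 (hK'1 hu) u huQ
      exact ((mem_Dset c a u u).1 h).2 rfl
    · intro u hu v hv
      have h := ((mem_Dset c a v u).1 ((mem_ComSet c a Q u).1 (hK'1 hu) v hv)).1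
      rw [hsymm u v]
      exact h
    · intro u hu v hv huv
      rw [hadef, Bool.not_not]
      exact hK'3 u hu v hv huv
    · intro u hu v hv huv
      rw [hadef, Bool.not_not]
      exact hQ3 u hu v hv huv
  · refine ⟨W', by rw [hKdef] at hW'card; linarith, ?_⟩
    rintro ⟨Q, hQ1, hQ2, hQ3⟩
    exact hQ ⟨Q, hQ1, hQ2, hQ3⟩

/-- There are absolute constants `C' > 0` and `C > 0` such that the following holds. Let
`0 < ε < 1/4`, let `t ≥ 1` and let `n ≥ ε^{-Ct}`. If `K_n` is 2-coloured (`true` = red,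
`false` = blue) so that every vertex has at least `n/4 + εn` neighbours in each colour, and
the colouring has no induced copy of `K_{t,t}` in either colour, then there are two disjoint
vertex sets `Sr`, `Sb`, each of size at least `ε^{-C't}`, such that `Sr` contains no red
clique of size `t` and `Sb` contains no blue clique of size `t`. -/
theorem stmt_9 :
    ∃ C' : ℝ, 0 < C' ∧ ∃ C : ℝ, 0 < C ∧
      ∀ (ε : ℝ) (t n : ℕ), 0 < ε → ε < 1 / 4 → 0 < t → 0 < n →
        (n : ℝ) ≥ ε ^ (-(C * t)) →
        ∀ c : Fin n → Fin n → Bool, (∀ u v, c u v = c v u) →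
          (∀ v : Fin n, ∀ col : Bool,
            (((univ.filter fun u => u ≠ v ∧ c v u = col)).card : ℝ) ≥ n / 4 + ε * n) →
          (∀ col, ¬HasInducedKtt c t col) →
          ∃ Sr Sb : Finset (Fin n), Disjoint Sr Sb ∧
            (Sr.card : ℝ) ≥ ε ^ (-(C' * t)) ∧ (Sb.card : ℝ) ≥ ε ^ (-(C' * t)) ∧
            (¬∃ K ⊆ Sr, K.card = t ∧ ∀ u ∈ K, ∀ v ∈ K, u ≠ v → c u v = true) ∧
            (¬∃ K ⊆ Sb, K.card = t ∧ ∀ u ∈ K, ∀ v ∈ K, u ≠ v → c u v = false) := by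
  classical
  refine ⟨1, one_pos, 100, by norm_num, ?_⟩
  intro ε t n hε0 hε4 ht hn hbig c hsymm hdeg hno
  have hone : ε ^ (-((1:ℝ) * (t:ℝ))) = ε ^ (-(t:ℝ)) := by norm_num
  have hβ0 : (0:ℝ) < ε ^ (-(t:ℝ)) := Real.rpow_pos_of_pos hε0 _
  have ht0 : (0:ℝ) ≤ (t:ℝ) := Nat.cast_nonneg t
  have hdeg' : ∀ (bb : Bool), ∀ v : Fin n,
      ((n:ℝ) / 4) ≤ ((univ.filter fun u => u ≠ v ∧ c v u = !bb).card : ℝ) := by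
    intro bb v
    have h := hdeg v (!bb)
    have hεn : (0:ℝ) ≤ ε * n := by positivity
    linarith
  obtain ⟨Sr₀, hSrcard, hSrfree⟩ :=
    exists_free_set ε t c true hε0 hε4 ht hn hbig hsymm (hdeg' true) (hno (!true))
  obtain ⟨Sb₀, hSbcard, hSbfree⟩ :=
    exists_free_set ε t c false hε0 hε4 ht hn hbig hsymm (hdeg' false) (hno (!false))
  by_cases hI : 2 * ε ^ (-(t:ℝ)) + 2 ≤ (((Sr₀ ∩ Sb₀).card : ℕ) : ℝ)
  · -- split the intersection in two halves
    have hhalf : (Sr₀ ∩ Sb₀).card / 2 ≤ (Sr₀ ∩ Sb₀).card := Nat.div_le_self _ _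
    obtain ⟨A, hA, hAcard⟩ := Finset.exists_subset_card_eq hhalf
    have hmodd : ((Sr₀ ∩ Sb₀).card : ℝ) ≤ 2 * (((Sr₀ ∩ Sb₀).card / 2 : ℕ) : ℝ) + 1 := by
      have hnat : (Sr₀ ∩ Sb₀).card ≤ 2 * ((Sr₀ ∩ Sb₀).card / 2) + 1 := by omega
      exact_mod_cast hnat
    have hAbig : ε ^ (-(t:ℝ)) ≤ ((A.card : ℕ) : ℝ) := by
      rw [hAcard]
      linarith
    refine ⟨A, (Sr₀ ∩ Sb₀) \ A, Finset.disjoint_sdiff, ?_, ?_, ?_, ?_⟩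
    · rw [ge_iff_le, hone]
      exact hAbig
    · rw [ge_iff_le, hone]
      have hcards : (((Sr₀ ∩ Sb₀) \ A).card : ℝ) = ((Sr₀ ∩ Sb₀).card : ℝ) - (A.card : ℝ) := by
        rw [Finset.card_sdiff_of_subset hA]
        have : A.card ≤ (Sr₀ ∩ Sb₀).card := Finset.card_le_card hA
        exact Nat.cast_sub this
      have hdivle : (((Sr₀ ∩ Sb₀).card / 2 : ℕ) : ℝ) ≤ ((Sr₀ ∩ Sb₀).card : ℝ) / 2 :=
        Nat.cast_div_le
      rw [hcards, hAcard]
      linarith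
    · rintro ⟨Kk, h1, h2, h3⟩
      exact hSrfree ⟨Kk, h1.trans (hA.trans inter_subset_left), h2, h3⟩
    · rintro ⟨Kk, h1, h2, h3⟩
      exact hSbfree ⟨Kk, h1.trans (sdiff_subset.trans inter_subset_right), h2, h3⟩
  · push_neg at hI
    refine ⟨Sr₀ \ Sb₀, Sb₀, sdiff_disjoint, ?_, ?_, ?_, hSbfree⟩
    · rw [ge_iff_le, hone]
      have hsub : Sr₀ ⊆ (Sr₀ \ Sb₀) ∪ (Sr₀ ∩ Sb₀) := by
        intro v hv
        by_cases h : v ∈ Sb₀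
        · exact mem_union_right _ (mem_inter.2 ⟨hv, h⟩)
        · exact mem_union_left _ (mem_sdiff.2 ⟨hv, h⟩)
      have h2 : Sr₀.card ≤ (Sr₀ \ Sb₀).card + (Sr₀ ∩ Sb₀).card :=
        le_trans (Finset.card_le_card hsub) (Finset.card_union_le _ _)
      have h3 : (Sr₀.card : ℝ) ≤ ((Sr₀ \ Sb₀).card : ℝ) + ((Sr₀ ∩ Sb₀).card : ℝ) := by
        exact_mod_cast h2
      linarith
    · rw [ge_iff_le, hone]
      linarith
    · rintro ⟨Kk, h1, h2, h3⟩
      exact hSrfree ⟨Kk, h1.trans sdiff_subset, h2, h3⟩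
end
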